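/- Let f be a palindrome in ℝ[z,z⁻¹] and g an antipalindrome in ℝ[z,z⁻¹]. If f and g are equicorrelational, then f = g = 0. -/

import Mathlib

open LaurentPolynomial
open scoped Classical

/-- The length of a Laurent polynomial: 1 plus the difference between the maximal and
minimal exponents occurring with nonzero coefficient; the length of 0 is 0. -/
noncomputable def len {F : Type*} [Field F] (f : LaurentPolynomial F) : ℤ :=
  if h : f = 0 then 0
  else f.coeff.support.max' (Finsupp.support_nonempty_iff.mpr (mt AddMonoidAlgebra.coeff_eq_zero.mp h))
     - f.coeff.support.min' (Finsupp.support_nonempty_iff.mpr (mt AddMonoidAlgebra.coeff_eq_zero.mp h)) + 1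

/-- Substitution `f(z) ↦ f(z^m)`: the image of `f` under the ring homomorphism
sending `z` to `z^m`. -/
noncomputable def subst {F : Type*} [Field F] (m : ℤ) (f : LaurentPolynomial F) :
    LaurentPolynomial F :=
  AddMonoidAlgebra.mapDomainRingHom F (AddMonoidHom.mulLeft m) f

/-- The subring `F[z,z⁻¹]` of `E[z,z⁻¹]` consisting of Laurent polynomials all of whose
coefficients lie in the subfield `F` of `E`. -/
noncomputable def LRing {E : Type*} [Field E] (F : Subfield E) :
    Subring (LaurentPolynomial E) where
  carrier := {f : LaurentPolynomial E | ∀ n : ℤ, f.coeff n ∈ F}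
  zero_mem' := fun n => F.zero_mem
  one_mem' := by
    intro n
    rw [AddMonoidAlgebra.one_def, AddMonoidAlgebra.coeff_single, Finsupp.single_apply]
    split_ifs
    · exact F.one_mem
    · exact F.zero_mem
  add_mem' := by
    intro f g hf hg n
    rw [AddMonoidAlgebra.coeff_add, Finsupp.add_apply]
    exact add_mem (hf n) (hg n)
  neg_mem' := by
    intro f hf n
    rw [AddMonoidAlgebra.coeff_neg, Finsupp.neg_apply]
    exact neg_mem (hf n)
  mul_mem' := by
    intro f g hf hg n
    rw [AddMonoidAlgebra.mul_apply]
    refine sum_mem fun a ha => sum_mem fun b hb => ?_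
    dsimp only
    split_ifs
    · exact mul_mem (hf a) (hg b)
    · exact zero_mem F

/-- The conjugate of `f(z) = Σ f_j z^j`, namely `f̄(z) = Σ conj(f_j) z^{-j}`. -/
noncomputable def lconj (f : LaurentPolynomial ℂ) : LaurentPolynomial ℂ :=
  AddMonoidAlgebra.ofCoeff
    (Finsupp.equivMapDomain (Equiv.neg ℤ) (Finsupp.mapRange (starRingEnd ℂ) (map_zero _) f.coeff))

/-- `f` and `g` are equicorrelational: `f·f̄ = c·g·ḡ` for some positive real `c`. -/
def Equicorrelational (f g : LaurentPolynomial ℂ) : Prop :=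
  ∃ c : ℝ, 0 < c ∧ f * lconj f = C (c : ℂ) * (g * lconj g)

/-- `f` and `g` are trivially equicorrelational: `g` is a `ℂ[z,z⁻¹]`-associate of `f`
or of `f̄`. -/
def TrivEquicorrelational (f g : LaurentPolynomial ℂ) : Prop :=
  Associated g f ∨ Associated g (lconj f)

/-- A generalized palindrome: `f̄` is a `ℂ[z,z⁻¹]`-associate of `f`. -/
def GenPalindrome (f : LaurentPolynomial ℂ) : Prop :=
  Associated (lconj f) f

/-- `g` is an `F[z,z⁻¹]`-associate of `f`: `g = u·f` for some unit `u` of the subring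
`F[z,z⁻¹]` of `ℂ[z,z⁻¹]`. -/
def FAssoc (F : Subfield ℂ) (g f : LaurentPolynomial ℂ) : Prop :=
  ∃ u : (LRing F)ˣ, g = ((u : LRing F) : LaurentPolynomial ℂ) * f

/-- The `F[z,z⁻¹]`-associate class of `f`. -/
def facl (F : Subfield ℂ) (f : LaurentPolynomial ℂ) : Set (LaurentPolynomial ℂ) :=
  {g | FAssoc F g f}

/-- The `F`-trivial equicorrelationality class of `f`: all elements of `F[z,z⁻¹]`
that are trivially equicorrelational to `f`. -/
def fte (F : Subfield ℂ) (f : LaurentPolynomial ℂ) : Set (LaurentPolynomial ℂ) :=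
  {g | g ∈ LRing F ∧ TrivEquicorrelational f g}

/-- A `k`-ary sequence: a Laurent polynomial whose support is a segment of consecutive
integers and whose nonzero coefficients are complex `k`-th roots of unity. -/
def IsKary (k : ℕ) (f : LaurentPolynomial ℂ) : Prop :=
  (∀ i j l : ℤ, i ≤ j → j ≤ l → f.coeff i ≠ 0 → f.coeff l ≠ 0 → f.coeff j ≠ 0) ∧
  ∀ n : ℤ, f.coeff n ≠ 0 → (f.coeff n) ^ k = 1

/-- A binary sequence: a Laurent polynomial whose support is a segment of consecutive
integers and whose nonzero coefficients all lie in `{1, -1}`. -/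
def IsBinary (f : LaurentPolynomial ℂ) : Prop :=
  (∀ i j l : ℤ, i ≤ j → j ≤ l → f.coeff i ≠ 0 → f.coeff l ≠ 0 → f.coeff j ≠ 0) ∧
  ∀ n : ℤ, f.coeff n ≠ 0 → f.coeff n = 1 ∨ f.coeff n = -1

/-!
Substituting `f̄ = z^j f` and `ḡ = -z^k g` turns `f f̄ = c g ḡ` into `z^j f² = -c z^k g²`.
Leading coefficients are multiplicative, so the (real) leading coefficients `a` of `f` and `b`
of `g` satisfy `a² = -c b²`, which for `c > 0` forces `a = b = 0`.
-/

namespace LaurentPolynomial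

variable {R : Type*}

noncomputable def leadingCoeff [Semiring R] (p : R[T;T⁻¹]) : R :=
  AddMonoidAlgebra.leadingCoeff ((↑) : ℤ → WithBot ℤ) p

section Semiring

variable [Semiring R] {p q : R[T;T⁻¹]}

theorem leadingCoeff_eq_zero_iff : p.leadingCoeff = 0 ↔ p = 0 :=
  AddMonoidAlgebra.leadingCoeff_eq_zero WithBot.coe_injective

@[simp]
theorem leadingCoeff_T (n : ℤ) : (T n : R[T;T⁻¹]).leadingCoeff = 1 :=
  AddMonoidAlgebra.leadingCoeff_single WithBot.coe_injective n 1

@[simp]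
theorem leadingCoeff_C (a : R) : (C a).leadingCoeff = a :=
  AddMonoidAlgebra.leadingCoeff_single WithBot.coe_injective 0 a

theorem leadingCoeff_eq_coeff {m : ℤ} (hm : p.coeff m ≠ 0)
    (hle : ∀ a ∈ p.coeff.support, a ≤ m) : p.leadingCoeff = p.coeff m := by
  have hdeg : p.supDegree ((↑) : ℤ → WithBot ℤ) = m :=
    AddMonoidAlgebra.supDegree_eq_of_isMaxOn (Finsupp.mem_support_iff.mpr hm)
      fun a ha => WithBot.coe_le_coe.mpr (hle a ha)
  rw [leadingCoeff, AddMonoidAlgebra.leadingCoeff, hdeg,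
    Function.leftInverse_invFun WithBot.coe_injective]

theorem exists_coeff_ne_zero_forall_le (hp : p ≠ 0) :
    ∃ m, p.coeff m ≠ 0 ∧ ∀ a ∈ p.coeff.support, a ≤ m := by
  have hs : p.coeff.support.Nonempty := by simpa [Finsupp.support_nonempty_iff]
  exact ⟨_, Finsupp.mem_support_iff.mp (p.coeff.support.max'_mem hs),
    fun a ha => p.coeff.support.le_max' a ha⟩

theorem coeff_mul_add_of_forall_le {m n : ℤ} (hp : ∀ a ∈ p.coeff.support, a ≤ m)
    (hq : ∀ a ∈ q.coeff.support, a ≤ n) :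
    (p * q).coeff (m + n) = p.coeff m * q.coeff n :=
  AddMonoidAlgebra.coeff_mul_add_of_uniqueAdd fun a b ha hb hab => by
    have := hp a ha
    have := hq b hb
    omega

theorem forall_le_add_of_mem_support_mul {m n : ℤ} (hp : ∀ a ∈ p.coeff.support, a ≤ m)
    (hq : ∀ a ∈ q.coeff.support, a ≤ n) : ∀ a ∈ (p * q).coeff.support, a ≤ m + n := by
  intro x hx
  obtain ⟨a, ha, b, hb, rfl⟩ :=
    Finset.mem_add.mp (AddMonoidAlgebra.support_coeff_mul_subset p q hx)
  exact add_le_add (hp a ha) (hq b hb)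

theorem leadingCoeff_mul [NoZeroDivisors R] (p q : R[T;T⁻¹]) :
    (p * q).leadingCoeff = p.leadingCoeff * q.leadingCoeff := by
  obtain rfl | hp := eq_or_ne p 0
  · simp [leadingCoeff]
  obtain rfl | hq := eq_or_ne q 0
  · simp [leadingCoeff]
  obtain ⟨m, hm, hpm⟩ := exists_coeff_ne_zero_forall_le hp
  obtain ⟨n, hn, hqn⟩ := exists_coeff_ne_zero_forall_le hq
  have hmn := coeff_mul_add_of_forall_le hpm hqn
  rw [leadingCoeff_eq_coeff hm hpm, leadingCoeff_eq_coeff hn hqn, ← hmn]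
  exact leadingCoeff_eq_coeff (hmn ▸ mul_ne_zero hm hn) (forall_le_add_of_mem_support_mul hpm hqn)

end Semiring

@[simp]
theorem leadingCoeff_neg [Ring R] (p : R[T;T⁻¹]) : (-p).leadingCoeff = -p.leadingCoeff := by
  simp [leadingCoeff, AddMonoidAlgebra.leadingCoeff, AddMonoidAlgebra.supDegree_neg]

end LaurentPolynomial

theorem Complex.eq_zero_of_sq_eq_neg_mul_sq {x y : ℂ} {c : ℝ} (hx : x.im = 0) (hy : y.im = 0)
    (hc : 0 < c) (h : x ^ 2 = -(c * y ^ 2)) : x = 0 ∧ y = 0 := by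
  obtain ⟨a, rfl⟩ : ∃ a : ℝ, (a : ℂ) = x := ⟨x.re, Complex.ext rfl hx.symm⟩
  obtain ⟨b, rfl⟩ : ∃ b : ℝ, (b : ℂ) = y := ⟨y.re, Complex.ext rfl hy.symm⟩
  have h : a ^ 2 + c * b ^ 2 = 0 := by exact_mod_cast add_eq_zero_iff_eq_neg.mpr h
  obtain ⟨ha, hb⟩ := (add_eq_zero_iff_of_nonneg (sq_nonneg a) (by positivity)).mp h
  exact ⟨by simpa using ha, by simpa [hc.ne'] using hb⟩

theorem stmt15 (f g : LaurentPolynomial ℂ)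
    (hfR : ∀ n : ℤ, (f.coeff n).im = 0) (hgR : ∀ n : ℤ, (g.coeff n).im = 0)
    (hfp : ∃ j : ℤ, lconj f = T j * f)
    (hgp : ∃ k : ℤ, lconj g = -(T k * g))
    (h : Equicorrelational f g) :
    f = 0 ∧ g = 0 := by
  obtain ⟨j, hj⟩ := hfp
  obtain ⟨k, hk⟩ := hgp
  obtain ⟨c, hc, hfg⟩ := h
  have hlc : f.leadingCoeff ^ 2 = -((c : ℂ) * g.leadingCoeff ^ 2) := by
    have := congrArg leadingCoeff hfg
    rw [hj, hk] at this
    simpa [leadingCoeff_mul, sq, mul_comm] using this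
  have hfa : f.leadingCoeff.im = 0 := hfR _
  have hgb : g.leadingCoeff.im = 0 := hgR _
  obtain ⟨hf, hg⟩ := Complex.eq_zero_of_sq_eq_neg_mul_sq hfa hgb hc hlc
  exact ⟨leadingCoeff_eq_zero_iff.mp hf, leadingCoeff_eq_zero_iff.mp hg⟩
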